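/- arXiv:1503.04480 — 12 statements merged into one kernel-verified Lean document; each statement's English description precedes it below -/
import Mathlib

section
/- Every topological space X satisfies l*¹(X) ≤ de(X): for every open cover 𝒰 of X there is a subset A ⊆ X with |A| ≤ de(X) such that X = St(A;𝒰), where de(X) is the supremum of cardinalities of discrete families of non-empty subsets of X. -/
open Cardinal

namespace Stmt4

universe u

variable {X : Type u}

/-- An indexed family of subsets is discrete if every point has a neighborhood meeting
at most one member of the family. -/
def DiscreteFamily [TopologicalSpace X] {ι : Type u} (F : ι → Set X) : Prop :=
  ∀ x : X, ∃ N ∈ nhds x, ∀ i j : ι, (N ∩ F i).Nonempty → (N ∩ F j).Nonempty → i = j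

/-- The star of a set `A` with respect to a family of sets `C`. -/
def star' (A : Set X) (C : Set (Set X)) : Set X := ⋃₀ {U | U ∈ C ∧ (U ∩ A).Nonempty}

/-- `l*¹(X) ≤ de(X)`: if `κ` bounds the cardinalities of all discrete families of
non-empty subsets of `X`, then every open cover `𝒰` admits a set `A` of cardinality
`≤ κ` with `St(A;𝒰) = X`. -/
theorem weakExtent_le_discreteExtent [TopologicalSpace X] (κ : Cardinal.{u})
    (hκ : ∀ (ι : Type u) (F : ι → Set X), (∀ i, (F i).Nonempty) → DiscreteFamily F →
      #ι ≤ κ) :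
    ∀ C : Set (Set X), (∀ U ∈ C, IsOpen U) → ⋃₀ C = Set.univ →
      ∃ A : Set X, #A ≤ κ ∧ star' A C = Set.univ := by
  intro C hopen hcov
  set S : Set (Set X) :=
    {A | ∀ U ∈ C, ∀ a ∈ A, ∀ b ∈ A, a ∈ U → b ∈ U → a = b} with hS
  obtain ⟨A, hAS, hAmax⟩ : ∃ m, Maximal (· ∈ S) m := by
    apply zorn_subset
    intro c hc hchain
    refine ⟨⋃₀ c, ?_, fun s hs => Set.subset_sUnion_of_mem hs⟩
    intro U hU a ha b hb haU hbU
    obtain ⟨s, hs, has⟩ := ha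
    obtain ⟨t, ht, hbt⟩ := hb
    rcases hchain.total hs ht with h | h
    · exact hc ht U hU a (h has) b hbt haU hbU
    · exact hc hs U hU a has b (h hbt) haU hbU
  have hmem : ∀ x : X, ∃ U ∈ C, x ∈ U := by
    intro x
    have : x ∈ ⋃₀ C := hcov ▸ Set.mem_univ x
    exact this
  refine ⟨A, ?_, ?_⟩
  · -- cardinality bound via discreteness of singletons
    have := hκ A (fun a => {(a : X)}) (fun a => ⟨a, rfl⟩) ?_
    · exact this
    · intro x
      obtain ⟨U, hU, hxU⟩ := hmem x
      refine ⟨U, (hopen U hU).mem_nhds hxU, ?_⟩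
      rintro ⟨a, ha⟩ ⟨b, hb⟩ ⟨y, hyU, hya⟩ ⟨z, hzU, hzb⟩
      simp only [Set.mem_singleton_iff] at hya hzb
      subst hya; subst hzb
      exact Subtype.ext (hAS U hU _ ha _ hb hyU hzU)
  · -- star' A C = univ
    ext x
    simp only [Set.mem_univ, iff_true]
    by_contra hx
    have hdisj : ∀ U ∈ C, x ∈ U → ∀ c ∈ A, c ∉ U := by
      intro U hU hxU c hc hcU
      exact hx ⟨U, ⟨hU, ⟨c, hcU, hc⟩⟩, hxU⟩
    have hxA : x ∈ A := by
      have hins : insert x A ∈ S := by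
        intro U hU a ha b hb haU hbU
        rcases ha with rfl | ha <;> rcases hb with rfl | hb
        · rfl
        · exact absurd hbU (hdisj U hU haU b hb)
        · exact absurd haU (hdisj U hU hbU a ha)
        · exact hAS U hU a ha b hb haU hbU
      exact hAmax hins (Set.subset_insert x A) (Set.mem_insert x A)
    obtain ⟨U, hU, hxU⟩ := hmem x
    exact hx ⟨U, ⟨hU, ⟨x, hxU, hxA⟩⟩, hxU⟩

end Stmt4
end

section
/- If X is a collectively Hausdorff topological space, then de(X) ≤ dc(X): every discrete family of non-empty subsets of X has cardinality at most the supremum of cardinalities of discrete families of non-empty open sets. -/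
open Cardinal

namespace Stmt6

universe u

variable {X : Type u}

def DiscreteFamily [TopologicalSpace X] {ι : Type u} (F : ι → Set X) : Prop :=
  ∀ x : X, ∃ N ∈ nhds x, ∀ i j : ι, (N ∩ F i).Nonempty → (N ∩ F j).Nonempty → i = j

/-- If `X` is collectively Hausdorff (every discrete family of finite sets can be
enlarged to a discrete family of open sets) and `κ` bounds the cardinalities of all
discrete families of non-empty open sets (`dc(X) ≤ κ`), then every discrete family of
non-empty subsets has cardinality `≤ κ` (`de(X) ≤ dc(X)`). -/
theorem discreteExtent_le_discreteCellularity [TopologicalSpace X]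
    (hCH : ∀ (ι : Type u) (F : ι → Set X), (∀ i, (F i).Finite) → DiscreteFamily F →
      ∃ G : ι → Set X, (∀ i, IsOpen (G i) ∧ F i ⊆ G i) ∧ DiscreteFamily G)
    (κ : Cardinal.{u})
    (hκ : ∀ (ι : Type u) (F : ι → Set X),
      (∀ i, IsOpen (F i) ∧ (F i).Nonempty) → DiscreteFamily F → #ι ≤ κ) :
    ∀ (ι : Type u) (F : ι → Set X), (∀ i, (F i).Nonempty) → DiscreteFamily F → #ι ≤ κ := by
  intro ι F hne hF
  choose x hx using hne
  have hdS : DiscreteFamily (fun i => ({x i} : Set X)) := by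
    intro p
    obtain ⟨N, hN, hNd⟩ := hF p
    exact ⟨N, hN, fun i j hi hj => hNd i j
      (hi.mono (Set.inter_subset_inter_right N (Set.singleton_subset_iff.2 (hx i))))
      (hj.mono (Set.inter_subset_inter_right N (Set.singleton_subset_iff.2 (hx j))))⟩
  obtain ⟨G, hG, hdG⟩ := hCH ι (fun i => ({x i} : Set X))
    (fun i => Set.finite_singleton _) hdS
  exact hκ ι G (fun i => ⟨(hG i).1, ⟨x i, (hG i).2 rfl⟩⟩) hdG

end Stmt6
end

section
/- If X is a Moore space, then l*¹(X) = d(X): the density of X equals its weak extent. -/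
open Cardinal

namespace Stmt7

universe u

variable (X : Type u) [TopologicalSpace X]

/-- The star `St(A;C)` of a set with respect to a family of sets. -/
def star' (A : Set X) (C : Set (Set X)) : Set X := ⋃₀ {U | U ∈ C ∧ (U ∩ A).Nonempty}

/-- The weak extent `l*¹(X)`: the least cardinal `κ` such that every open cover `C`
admits a subset `A` with `#A ≤ κ` and `St(A;C) = X`. -/
noncomputable def weakExtent : Cardinal.{u} :=
  sInf {κ | ∀ C : Set (Set X), (∀ U ∈ C, IsOpen U) → ⋃₀ C = Set.univ →
    ∃ A : Set X, #A ≤ κ ∧ star' X A C = Set.univ}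

/-- The density `d(X)`: the least cardinality bound of a dense subset. -/
noncomputable def density : Cardinal.{u} :=
  sInf {κ | ∃ A : Set X, #A ≤ κ ∧ Dense A}

/-- If `X` is a Moore space (a regular T₁-space with a sequence of open covers whose
stars at each point form a neighborhood base), then `l*¹(X) = d(X)`. -/
theorem weakExtent_eq_density_of_Moore [T1Space X] [RegularSpace X]
    (𝒰 : ℕ → Set (Set X))
    (hopen : ∀ n, ∀ U ∈ 𝒰 n, IsOpen U)
    (hcov : ∀ n, ⋃₀ 𝒰 n = Set.univ)
    (hbase : ∀ x : X, ∀ N ∈ nhds x, ∃ n, star' X {x} (𝒰 n) ⊆ N) :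
    weakExtent X = density X := by
  haveI : T2Space X := inferInstance
  have hdne : {κ : Cardinal.{u} | ∃ A : Set X, #A ≤ κ ∧ Dense A}.Nonempty :=
    ⟨#X, Set.univ, by rw [Cardinal.mk_univ], dense_univ⟩
  have hwne : {κ : Cardinal.{u} | ∀ C : Set (Set X), (∀ U ∈ C, IsOpen U) → ⋃₀ C = Set.univ →
      ∃ A : Set X, #A ≤ κ ∧ star' X A C = Set.univ}.Nonempty := by
    refine ⟨#X, fun C _hC hcovC => ⟨Set.univ, by rw [Cardinal.mk_univ], ?_⟩⟩
    apply Set.eq_univ_of_forall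
    intro x
    have hx : x ∈ ⋃₀ C := by rw [hcovC]; trivial
    obtain ⟨U, hU, hxU⟩ := hx
    exact ⟨U, ⟨hU, ⟨x, hxU, trivial⟩⟩, hxU⟩
  obtain ⟨D0, hD0card, hD0dense⟩ := csInf_mem hdne
  have hwmem := csInf_mem hwne
  apply le_antisymm
  · -- weakExtent ≤ density
    apply csInf_le'
    intro C hC hcovC
    refine ⟨D0, hD0card, Set.eq_univ_of_forall fun x => ?_⟩
    have hx : x ∈ ⋃₀ C := by rw [hcovC]; trivial
    obtain ⟨U, hUC, hxU⟩ := hx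
    exact ⟨U, ⟨hUC, hD0dense.inter_open_nonempty U (hC U hUC) ⟨x, hxU⟩⟩, hxU⟩
  · -- density ≤ weakExtent
    rcases lt_or_ge (weakExtent X) Cardinal.aleph0 with hfin | hinf
    · -- finite weak extent: the space itself has at most `weakExtent X` points
      suffices h : #X ≤ weakExtent X by
        apply csInf_le'
        exact ⟨Set.univ, by rwa [Cardinal.mk_univ], dense_univ⟩
      by_contra hlt
      push_neg at hlt
      obtain ⟨m, hm⟩ := Cardinal.lt_aleph0.mp hfin
      have h1 : ((m + 1 : ℕ) : Cardinal.{u}) ≤ #X := by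
        rw [Cardinal.nat_succ]
        exact Order.succ_le_of_lt (hm ▸ hlt)
      have h1' : Cardinal.lift.{u} #(Fin (m + 1)) ≤ Cardinal.lift.{0} #X := by
        simpa using h1
      obtain ⟨e⟩ := Cardinal.lift_mk_le'.mp h1'
      obtain ⟨V, hV, hVdisj⟩ := (Set.finite_range (⇑e)).t2_separation
      set C : Set (Set X) := Set.range (fun i : Fin (m + 1) => V (e i)) ∪ {(Set.range ⇑e)ᶜ}
        with hCdef
      have hCopen : ∀ U ∈ C, IsOpen U := by
        rintro U (⟨i, rfl⟩ | hU)
        · exact (hV (e i)).2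
        · rw [Set.mem_singleton_iff] at hU
          subst hU
          exact ((Set.finite_range (⇑e)).isClosed).isOpen_compl
      have hCcov : ⋃₀ C = Set.univ := by
        apply Set.eq_univ_of_forall
        intro x
        by_cases hx : x ∈ Set.range ⇑e
        · obtain ⟨i, rfl⟩ := hx
          exact ⟨V (e i), Or.inl ⟨i, rfl⟩, (hV (e i)).1⟩
        · exact ⟨(Set.range ⇑e)ᶜ, Or.inr rfl, hx⟩
      obtain ⟨A, hAcard, hAstar⟩ := hwmem C hCopen hCcov
      -- for each i, the set V (e i) meets A
      have key : ∀ i : Fin (m + 1), ((V (e i)) ∩ A).Nonempty := by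
        intro i
        have hxi : e i ∈ star' X A C := by rw [hAstar]; trivial
        obtain ⟨U, ⟨hUC, hUA⟩, hxU⟩ := hxi
        rcases hUC with ⟨j, rfl⟩ | hU
        · rcases eq_or_ne (e i) (e j) with hij | hij
          · rw [hij]; exact hUA
          · exact absurd rfl ((hVdisj ⟨i, rfl⟩ ⟨j, rfl⟩ hij).ne_of_mem (hV (e i)).1 hxU)
        · rw [Set.mem_singleton_iff] at hU
          subst hU
          exact absurd ⟨i, rfl⟩ hxU
      choose f hfV hfA using key
      have hfinj : Function.Injective f := by
        intro i j hij
        by_contra hne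
        have hij' : e i ≠ e j := fun h => hne (e.injective h)
        have hmem : f i ∈ V (e j) := by rw [hij]; exact hfV j
        exact (hVdisj ⟨i, rfl⟩ ⟨j, rfl⟩ hij').ne_of_mem (hfV i) hmem rfl
      have hcard : ((m + 1 : ℕ) : Cardinal.{u}) ≤ #A := by
        have := Cardinal.lift_mk_le'.mpr
          ⟨⟨fun i => (⟨f i, hfA i⟩ : A), fun i j h => hfinj (congrArg Subtype.val h)⟩⟩
        simpa using this
      have : ((m + 1 : ℕ) : Cardinal) ≤ (m : Cardinal) := hcard.trans (hAcard.trans hm.le)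
      rw [Nat.cast_le] at this
      omega
    · -- infinite weak extent
      choose A hAcard hAstar using fun n => hwmem (𝒰 n) (hopen n) (hcov n)
      apply csInf_le'
      refine ⟨⋃ n : ULift.{u} ℕ, A n.down, ?_, ?_⟩
      · calc #(⋃ n : ULift.{u} ℕ, A n.down)
            ≤ #(ULift.{u} ℕ) * ⨆ n : ULift.{u} ℕ, #(A n.down) :=
              Cardinal.mk_iUnion_le _
          _ ≤ ℵ₀ * weakExtent X := by
              rw [Cardinal.mk_eq_aleph0]
              exact mul_le_mul_right (ciSup_le' fun (n : ULift.{u} ℕ) => hAcard n.down) _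
          _ = weakExtent X := Cardinal.aleph0_mul_eq hinf
      · rw [dense_iff_inter_open]
        intro U hU ⟨x, hxU⟩
        obtain ⟨n, hn⟩ := hbase x U (hU.mem_nhds hxU)
        have hx : x ∈ star' X (A n) (𝒰 n) := by rw [hAstar]; trivial
        obtain ⟨W, ⟨hW, a, haW, haA⟩, hxW⟩ := hx
        refine ⟨a, hn ⟨W, ⟨hW, ⟨x, hxW, rfl⟩⟩, haW⟩, Set.mem_iUnion.mpr ⟨ULift.up n, haA⟩⟩

end Stmt7
end

section
/- If X is a Moore space, then every subspace Y ⊆ X has density d(Y) ≤ e(X), where e(X) is the supremum of cardinalities of closed discrete subspaces of X; hence hd(X) ≤ e(X). -/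
open Cardinal

/-!
For each `n`, a maximal subset of `Y` meeting every member of `𝒰 n` in at most one point is
closed discrete, hence has at most `κ` points, and every point of `Y` lies in a member of `𝒰 n`
that meets it. As the stars of the `𝒰 n` form neighbourhood bases, the union over `n` of these
sets is dense in `Y`. For finite `κ` this count does not work, but then `X` itself is finite
with at most `κ` points, since finite sets are closed discrete.
-/

namespace Stmt8

universe u

variable (X : Type u) [TopologicalSpace X]

def star' (A : Set X) (C : Set (Set X)) : Set X := ⋃₀ {U | U ∈ C ∧ (U ∩ A).Nonempty}

section Separated

variable {α : Type*} {C : Set (Set α)} {A : Set α}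

def IsSeparatedBy (C : Set (Set α)) (A : Set α) : Prop :=
  ∀ U ∈ C, (U ∩ A).Subsingleton

lemma IsSeparatedBy.sUnion_of_isChain {S : Set (Set α)} (hS : ∀ A ∈ S, IsSeparatedBy C A)
    (hchain : IsChain (· ⊆ ·) S) : IsSeparatedBy C (⋃₀ S) := by
  rintro U hU x ⟨hxU, A, hA, hxA⟩ y ⟨hyU, B, hB, hyB⟩
  rcases hchain.total hA hB with hAB | hBA
  · exact hS B hB U hU ⟨hxU, hAB hxA⟩ ⟨hyU, hyB⟩
  · exact hS A hA U hU ⟨hxU, hxA⟩ ⟨hyU, hBA hyB⟩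

lemma IsSeparatedBy.insert (hA : IsSeparatedBy C A) {y : α}
    (hy : ∀ U ∈ C, y ∈ U → U ∩ A = ∅) : IsSeparatedBy C (insert y A) := by
  intro U hU
  by_cases hyU : y ∈ U
  · rw [Set.inter_insert_of_mem hyU, hy U hU hyU, insert_empty_eq]
    exact Set.subsingleton_singleton
  · rw [Set.inter_insert_of_notMem hyU]
    exact hA U hU

lemma exists_isSeparatedBy_subset_forall_exists_inter_nonempty (hcov : ⋃₀ C = Set.univ)
    (Y : Set α) : ∃ A ⊆ Y, IsSeparatedBy C A ∧
      ∀ y ∈ Y, ∃ U ∈ C, y ∈ U ∧ (U ∩ A).Nonempty := by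
  obtain ⟨A, ⟨hAY, hA⟩, hmax⟩ := zorn_subset {A | A ⊆ Y ∧ IsSeparatedBy C A}
    fun S hS hchain => ⟨⋃₀ S, ⟨Set.sUnion_subset fun A hA => (hS hA).1,
      IsSeparatedBy.sUnion_of_isChain (fun A hA => (hS hA).2) hchain⟩,
      fun _ => Set.subset_sUnion_of_mem⟩
  refine ⟨A, hAY, hA, fun y hyY => ?_⟩
  by_cases hyA : y ∈ A
  · obtain ⟨U, hU, hyU⟩ := Set.sUnion_eq_univ_iff.mp hcov y
    exact ⟨U, hU, hyU, y, hyU, hyA⟩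
  by_contra! hfar
  exact hyA (hmax ⟨Set.insert_subset hyY hAY, hA.insert hfar⟩ (Set.subset_insert y A)
    (Set.mem_insert y A))

end Separated

section SeparatedTopology

variable {X} {C : Set (Set X)} {A : Set X}

lemma IsSeparatedBy.isClosed [T1Space X] (hopen : ∀ U ∈ C, IsOpen U)
    (hcov : ⋃₀ C = Set.univ) (hA : IsSeparatedBy C A) : IsClosed A := by
  refine closure_subset_iff_isClosed.mp fun x hx => ?_
  obtain ⟨U, hU, hxU⟩ := Set.sUnion_eq_univ_iff.mp hcov x
  have hx' : x ∈ closure (U ∩ A) := (hopen U hU).inter_closure ⟨hxU, hx⟩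
  obtain ⟨a, haUA⟩ := closure_nonempty_iff.mp ⟨x, hx'⟩
  rw [(hA U hU).eq_singleton_of_mem haUA, closure_singleton] at hx'
  exact hx' ▸ haUA.2

lemma IsSeparatedBy.discreteTopology (hopen : ∀ U ∈ C, IsOpen U)
    (hcov : ⋃₀ C = Set.univ) (hA : IsSeparatedBy C A) : DiscreteTopology A :=
  discreteTopology_subtype_iff'.mpr fun y hy =>
    let ⟨U, hU, hyU⟩ := Set.sUnion_eq_univ_iff.mp hcov y
    ⟨U, hopen U hU, (hA U hU).eq_singleton_of_mem ⟨hyU, hy⟩⟩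

end SeparatedTopology

lemma subset_closure_iUnion_of_star_base {𝒰 : ℕ → Set (Set X)}
    (hbase : ∀ x : X, ∀ N ∈ nhds x, ∃ n, star' X {x} (𝒰 n) ⊆ N) {Y : Set X} {A : ℕ → Set X}
    (hA : ∀ n, ∀ y ∈ Y, ∃ U ∈ 𝒰 n, y ∈ U ∧ (U ∩ A n).Nonempty) :
    Y ⊆ closure (⋃ n, A n) := by
  intro y hy
  refine mem_closure_iff_nhds.mpr fun N hN => ?_
  obtain ⟨n, hn⟩ := hbase y N hN
  obtain ⟨U, hU, hyU, a, haU, haA⟩ := hA n y hy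
  exact ⟨a, hn ⟨U, ⟨hU, y, hyU, rfl⟩, haU⟩, Set.mem_iUnion.mpr ⟨n, haA⟩⟩

lemma mk_iUnion_nat_le {α : Type u} {κ : Cardinal.{u}} (hκ : ℵ₀ ≤ κ) (f : ℕ → Set α)
    (hf : ∀ n, #(f n) ≤ κ) : #(⋃ n, f n) ≤ κ := by
  have hunion := mk_iUnion_le_lift f
  simp only [lift_uzero, mk_nat, lift_aleph0] at hunion
  calc _ ≤ _ := hunion
    _ ≤ ℵ₀ * κ := by gcongr; exact ciSup_le hf
    _ = κ := aleph0_mul_eq hκ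

lemma mk_le_of_forall_isClosed_discreteTopology_le_nat [T1Space X] {n : ℕ}
    (he : ∀ D : Set X, IsClosed D → DiscreteTopology D → #D ≤ n) : #X ≤ n := by
  rw [← mk_univ, mk_le_iff_forall_finset_subset_card_le]
  intro s _
  simpa using he s s.finite_toSet.isClosed inferInstance

theorem hereditaryDensity_le_extent_of_Moore [T1Space X]
    (𝒰 : ℕ → Set (Set X))
    (hopen : ∀ n, ∀ U ∈ 𝒰 n, IsOpen U)
    (hcov : ∀ n, ⋃₀ 𝒰 n = Set.univ)
    (hbase : ∀ x : X, ∀ N ∈ nhds x, ∃ n, star' X {x} (𝒰 n) ⊆ N)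
    (κ : Cardinal.{u})
    (he : ∀ D : Set X, IsClosed D → DiscreteTopology D → #D ≤ κ) :
    ∀ Y : Set X, ∃ A : Set X, A ⊆ Y ∧ #A ≤ κ ∧ Y ⊆ closure A := by
  intro Y
  rcases lt_or_ge κ ℵ₀ with hfin | hinf
  · obtain ⟨n, rfl⟩ := lt_aleph0.mp hfin
    exact ⟨Y, subset_rfl,
      (mk_set_le Y).trans (mk_le_of_forall_isClosed_discreteTopology_le_nat X he), subset_closure⟩
  choose A hAY hsep hnear using fun n =>
    exists_isSeparatedBy_subset_forall_exists_inter_nonempty (hcov n) Y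
  refine ⟨⋃ n, A n, Set.iUnion_subset hAY, mk_iUnion_nat_le hinf A fun n => ?_,
    subset_closure_iUnion_of_star_base X hbase hnear⟩
  exact he _ ((hsep n).isClosed (hopen n) (hcov n)) ((hsep n).discreteTopology (hopen n) (hcov n))

end Stmt8
end

section
/- Every countable T₁-space X satisfies: for every neighborhood assignment U on X there exists a neighborhood assignment V on X with VV = V and V ⊆ U. Consequently the universal pre-uniformity of X equals its universal quasi-uniformity. -/
namespace Stmt10

variable {X : Type*} [TopologicalSpace X]

def rcomp (U V : Set (X × X)) : Set (X × X) := {p | ∃ y, (p.1, y) ∈ U ∧ (y, p.2) ∈ V}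

def IsNbhdAssignment (U : Set (X × X)) : Prop := ∀ x : X, {y | (x, y) ∈ U} ∈ nhds x

open Classical

noncomputable def OO (U : Set (X × X)) (f : X → ℕ) : ℕ → Set X
  | n =>
    if h : ∃ x, f x = n then
      interior ({y | (h.choose, y) ∈ U} ∩
        (⋂ k, ⋂ _ : k < n, if h.choose ∈ OO U f k then OO U f k else Set.univ) ∩
        {y | f y < n}ᶜ)
    else ∅
  termination_by n => n
  decreasing_by all_goals assumption

lemma OO_open (U : Set (X × X)) (f : X → ℕ) (n : ℕ) : IsOpen (OO U f n) := by
  rw [OO]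
  split
  · exact isOpen_interior
  · exact isOpen_empty

lemma exists_fx (f : X → ℕ) (x : X) : ∃ x', f x' = f x := ⟨x, rfl⟩

lemma choose_eq {f : X → ℕ} (hf : Function.Injective f) (x : X) :
    (exists_fx f x).choose = x := hf (exists_fx f x).choose_spec

lemma OO_eq (U : Set (X × X)) {f : X → ℕ} (hf : Function.Injective f) (x : X) :
    OO U f (f x) = interior ({y | (x, y) ∈ U} ∩
      (⋂ k, ⋂ _ : k < f x, if x ∈ OO U f k then OO U f k else Set.univ) ∩
      {y | f y < f x}ᶜ) := by
  conv_lhs => rw [OO]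
  rw [dif_pos (exists_fx f x)]
  rw [choose_eq hf]

lemma mem_OO [T1Space X] {U : Set (X × X)} (hU : IsNbhdAssignment U)
    {f : X → ℕ} (hf : Function.Injective f) (x : X) : x ∈ OO U f (f x) := by
  rw [OO_eq U hf, mem_interior_iff_mem_nhds]
  refine Filter.inter_mem (Filter.inter_mem (hU x) ?_) ?_
  · have : (⋂ k, ⋂ _ : k < f x, if x ∈ OO U f k then OO U f k else Set.univ)
        = ⋂ k ∈ Set.Iio (f x), (if x ∈ OO U f k then OO U f k else Set.univ) := rfl
    rw [this]
    refine (Filter.biInter_mem (Set.finite_Iio (f x))).2 fun k _ => ?_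
    split_ifs with hk
    · exact (OO_open U f k).mem_nhds hk
    · exact Filter.univ_mem
  · have hfin : Set.Finite {y | f y < f x} := by
      have : {y | f y < f x} = f ⁻¹' (Set.Iio (f x)) := rfl
      rw [this]
      exact Set.Finite.preimage hf.injOn (Set.finite_Iio _)
    exact hfin.isClosed.isOpen_compl.mem_nhds (by simp)

lemma OO_subset_ball (U : Set (X × X)) {f : X → ℕ} (hf : Function.Injective f) (x : X) :
    OO U f (f x) ⊆ {y | (x, y) ∈ U} := by
  rw [OO_eq U hf]
  exact interior_subset.trans (fun y hy => hy.1.1)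

lemma notMem_OO (U : Set (X × X)) (f : X → ℕ) {y : X} {n : ℕ} (h : f y < n) :
    y ∉ OO U f n := by
  rw [OO]
  split
  · intro hy
    exact (interior_subset hy).2 h
  · exact Set.notMem_empty y

lemma OO_subset (U : Set (X × X)) {f : X → ℕ} (hf : Function.Injective f)
    {x : X} {k : ℕ} (hk : k < f x) (hx : x ∈ OO U f k) :
    OO U f (f x) ⊆ OO U f k := by
  rw [OO_eq U hf]
  refine interior_subset.trans (fun y hy => ?_)
  have := hy.1.2
  have h2 := Set.mem_iInter.1 (Set.mem_iInter.1 this k) hk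
  rwa [if_pos hx] at h2

/-- In a countable T₁-space, every neighborhood assignment `U` contains an idempotent
neighborhood assignment `V` (`VV = V ⊆ U`); consequently the universal pre-uniformity
coincides with the universal quasi-uniformity. -/
theorem countable_t1_preUniformity_eq_quasiUniformity [Countable X] [T1Space X]
    (U : Set (X × X)) (hU : IsNbhdAssignment U) :
    ∃ V : Set (X × X), IsNbhdAssignment V ∧ rcomp V V = V ∧ V ⊆ U := by
  obtain ⟨f, hf⟩ := countable_iff_exists_injective X |>.1 ‹Countable X›
  refine ⟨{p : X × X | p.2 ∈ OO U f (f p.1)}, ?_, ?_, ?_⟩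
  · intro x
    exact (OO_open U f (f x)).mem_nhds (mem_OO hU hf x)
  · ext ⟨x, z⟩
    constructor
    · rintro ⟨y, hy, hz⟩
      simp only [Set.mem_setOf_eq] at *
      rcases lt_trichotomy (f y) (f x) with h | h | h
      · exact absurd hy (notMem_OO U f h)
      · rwa [hf h] at hz
      · exact OO_subset U hf h hy hz
    · intro h
      exact ⟨x, mem_OO hU hf x, h⟩
  · rintro ⟨x, z⟩ h
    exact OO_subset_ball U hf x h

end Stmt10
end

section
/- Let X = ω₁ with the order topology. There exists a neighborhood assignment U on X such that no neighborhood assignment V on X satisfies VV ⊆ U. Hence the universal pre-uniformity on ω₁ is not equal to its square. -/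
/-!
Let `(S β)` be pairwise disjoint stationary sets with `S β ⊆ (β, ω₁)` (a row of an Ulam matrix)
and let `U` assign the ball `(β, x]` to each `x ∈ S β`. Every ball `B(x; V)` of a neighbourhood
assignment `V` contains an interval `(f x, x]`, and by Fodor's lemma `f` is constant, say `γ`, on a
stationary set `T`. Take `β > γ` with `S β` stationary and `x ∈ S β` in the closure of `T`: some
`y ∈ T ∩ B(x; V)` has `β < y ≤ x`, so `β ∈ (γ, y] ⊆ B(y; V)` and `(x, β) ∈ VV`, although
`β ∉ (β, x] = B(x; U)`.
-/

open Set Cardinal Order Topology Function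

namespace Stmt11

def rcomp {X : Type*} (U V : Set (X × X)) : Set (X × X) :=
  {p | ∃ y, (p.1, y) ∈ U ∧ (y, p.2) ∈ V}

def IsNbhdAssignment {X : Type*} [TopologicalSpace X] (U : Set (X × X)) : Prop :=
  ∀ x : X, {y | (x, y) ∈ U} ∈ nhds x

end Stmt11

section LinearOrder

variable {X : Type*} [LinearOrder X]

theorem isClub_Ici (a : X) : IsClub (Ici a) :=
  ⟨fun _ hd ⟨_, hc⟩ _ _ hx => (hd hc).trans (hx.1 hc),
    fun x => ⟨max x a, le_max_right x a, le_max_left x a⟩⟩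

theorem IsStationary.isCofinal {T : Set X} (hT : IsStationary T) : IsCofinal T := fun a =>
  let ⟨y, hyT, hay⟩ := hT (isClub_Ici a)
  ⟨y, hyT, hay⟩

theorem isStationary_Ioi [NoMaxOrder X] (a : X) : IsStationary (Ioi a) := by
  refine .of_not_isCofinal_compl <| not_isCofinal_iff.2 ?_
  obtain ⟨b, hab⟩ := exists_gt a
  exact ⟨b, fun y hy => (not_lt.1 hy).trans_lt hab⟩

theorem isClub_setOf_inter_Ioc_nonempty {T : Set X} (hT : IsCofinal T) :
    IsClub {x | ∀ m < x, (T ∩ Ioc m x).Nonempty} := by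
  refine ⟨fun d hd _ _ a ha m hma => ?_, hT.mono fun x hx m hmx => ⟨x, hx, hmx, le_rfl⟩⟩
  obtain ⟨c, hc, hmc⟩ := (lt_isLUB_iff ha).1 hma
  obtain ⟨y, hyT, hmy, hyc⟩ := hd hc m hmc
  exact ⟨y, hyT, hmy, hyc.trans (ha.1 hc)⟩

theorem noMaxOrder_of_aleph0_lt_cof (hX : ℵ₀ < cof X) : NoMaxOrder X :=
  (noTopOrder_iff_noMaxOrder X).1 <| cof_ne_one_iff.1 (one_lt_aleph0.trans hX).ne'

theorem bddAbove_of_mk_lt_cof {s : Set X} (hs : #s < cof X) : BddAbove s :=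
  .of_not_isCofinal fun h => (cof_le h).not_gt hs

theorem exists_isCofinal_preimage_singleton {ι : Type*} [Countable ι] (hX : ℵ₀ < cof X)
    (f : X → ι) : ∃ i, IsCofinal (f ⁻¹' {i}) := by
  have hcover : IsCofinal (⋃₀ range fun i => f ⁻¹' {i}) :=
    IsCofinal.univ.mono fun x _ => mem_sUnion_of_mem (mem_singleton (f x)) (mem_range_self (f x))
  obtain ⟨_, ⟨i, rfl⟩, hi⟩ := isCofinal_of_isCofinal_sUnion hcover
    ((le_aleph0_iff_set_countable.2 (countable_range _)).trans_lt hX)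
  exact ⟨i, hi⟩

def diagInter (C : X → Set X) : Set X := {x | ∀ γ < x, x ∈ C γ}

theorem dirSupClosed_diagInter {C : X → Set X} (hC : ∀ γ, DirSupClosed (C γ)) :
    DirSupClosed (diagInter C) := by
  intro d hd _ _ a ha γ hγa
  obtain ⟨c, hc, hγc⟩ := (lt_isLUB_iff ha).1 hγa
  exact hC γ (d := d ∩ Ici c) (fun y hy => hd hy.1 γ (hγc.trans_le hy.2)) ⟨c, hc, le_rfl⟩
    (.of_linearOrder _) (ha.inter_Ici_of_mem hc)

section WellFoundedLT

variable [WellFoundedLT X]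

theorem exists_isLUB_range_of_aleph0_lt_cof (hX : ℵ₀ < cof X) (g : ℕ → X) :
    ∃ x, IsLUB (range g) x := by
  have hg : BddAbove (range g) :=
    bddAbove_of_mk_lt_cof ((le_aleph0_iff_set_countable.2 (countable_range g)).trans_lt hX)
  exact ⟨wellFounded_lt.min _ hg, wellFounded_lt.min_mem _ hg,
    fun _ hb => wellFounded_lt.min_le hb⟩

theorem isClub_diagInter (hX : ℵ₀ < cof X) (hIio : ∀ x : X, #(Iio x) < cof X)
    {C : X → Set X} (hC : ∀ γ, IsClub (C γ)) : IsClub (diagInter C) := by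
  refine ⟨dirSupClosed_diagInter fun γ => (hC γ).dirSupClosed, fun a => ?_⟩
  choose c hcC hc using fun γ => (hC γ).isCofinal
  have hbound : ∀ y, ∃ z, y ≤ z ∧ ∀ γ < y, c γ y ≤ z := fun y => by
    obtain ⟨b, hb⟩ := bddAbove_of_mk_lt_cof (mk_image_le.trans_lt (hIio y))
      (s := (fun γ => c γ y) '' Iio y)
    exact ⟨max y b, le_max_left y b, fun γ hγ => (hb ⟨γ, hγ, rfl⟩).trans (le_max_right y b)⟩
  choose next hle hnext using hbound
  set g : ℕ → X := fun n => next^[n] a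
  have hg_succ : ∀ n, g (n + 1) = next (g n) := fun n => Function.iterate_succ_apply' next n a
  have hg : Monotone g := monotone_nat_of_le_succ fun n => (hg_succ n).symm ▸ hle (g n)
  obtain ⟨x, hx⟩ := exists_isLUB_range_of_aleph0_lt_cof hX g
  refine ⟨x, fun γ hγx => ?_, hx.1 ⟨0, rfl⟩⟩
  obtain ⟨_, ⟨n, rfl⟩, hγn⟩ := (lt_isLUB_iff hx).1 hγx
  -- the points `c γ (g m)`, `m ≥ n`, are interleaved with the `g m`, so they also have supremum `x`
  refine (hC γ).isLUB_mem (t := range fun m => c γ (g (n + m)))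
    (range_subset_iff.2 fun m => hcC γ _) (range_nonempty _) ⟨?_, fun b hb => hx.2 ?_⟩
  · rintro _ ⟨m, rfl⟩
    calc c γ (g (n + m)) ≤ g (n + m + 1) :=
          (hg_succ _).symm ▸ hnext _ γ (hγn.trans_le (hg (Nat.le_add_right n m)))
      _ ≤ x := hx.1 ⟨_, rfl⟩
  · rintro _ ⟨m, rfl⟩
    exact (hg (Nat.le_add_left m n)).trans ((hc γ _).trans (hb ⟨m, rfl⟩))

/-- Fodor's pressing-down lemma. -/
theorem IsStationary.exists_isStationary_inter_preimage_singleton (hX : ℵ₀ < cof X)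
    (hIio : ∀ x : X, #(Iio x) < cof X) {S : Set X} (hS : IsStationary S) {f : X → X}
    (hf : ∀ x ∈ S, f x < x) : ∃ γ, IsStationary (S ∩ f ⁻¹' {γ}) := by
  by_contra! h
  simp_rw [not_isStationary_iff] at h
  choose C hC hSC using h
  obtain ⟨x, hxS, hxC⟩ := hS (isClub_diagInter hX hIio hC)
  exact disjoint_left.1 (hSC (f x)) ⟨hxS, rfl⟩ (hxC (f x) (hf x hxS))

end WellFoundedLT

end LinearOrder

section OmegaOne

variable {X : Type*} [LinearOrder X]

theorem aleph0_lt_cof_of_countable_Iio [Uncountable X] (hIio : ∀ x : X, (Iio x).Countable) :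
    ℵ₀ < cof X := by
  refine lt_of_not_ge fun h => (not_countable_univ (α := X)) ?_
  obtain ⟨s, hs, hcard⟩ := exists_cof_eq X
  have hsc : s.Countable := le_aleph0_iff_set_countable.1 (hcard.trans_le h)
  refine (hsc.biUnion fun a _ => Iio_insert (a := a) ▸ (hIio a).insert a).mono fun x _ => ?_
  obtain ⟨a, ha, hxa⟩ := hs x
  exact mem_biUnion ha hxa

variable [WellFoundedLT X]

/-- A row of an Ulam matrix: `S β = {x | β < x ∧ g x β = n}` for injections `g x : Iio x → ℕ`
and a suitable `n`. -/
theorem exists_pairwise_disjoint_isStationary (hX : ℵ₀ < cof X)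
    (hIio : ∀ x : X, (Iio x).Countable) :
    ∃ S : X → Set X, Pairwise (Disjoint on S) ∧ (∀ β, S β ⊆ Ioi β) ∧
      IsCofinal {β | IsStationary (S β)} := by
  have := noMaxOrder_of_aleph0_lt_cof hX
  choose g hg using fun x => Set.countable_iff_exists_injective.1 (hIio x)
  let A : ℕ → X → Set X := fun n β => {x | ∃ h : β < x, g x ⟨β, h⟩ = n}
  have hA : ∀ β, ∃ n, IsStationary (A n β) := fun β =>
    (isStationary_iUnion_iff_of_countable hX.ne').1 <|
      (isStationary_Ioi β).mono fun x hx => mem_iUnion.2 ⟨_, hx, rfl⟩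
  choose n hn using hA
  obtain ⟨k, hk⟩ := exists_isCofinal_preimage_singleton hX n
  refine ⟨A k, fun β β' hne => disjoint_left.2 ?_, fun β x hx => hx.1,
    hk.mono fun β (hβ : n β = k) => hβ ▸ hn β⟩
  rintro x ⟨h, hx⟩ ⟨h', hx'⟩
  exact hne (congrArg Subtype.val (hg x (hx.trans hx'.symm)))

end OmegaOne

theorem Ordinal.countable_Iio_of_lt_ord_aleph_one {o : Ordinal} (ho : o < (aleph 1).ord) :
    (Iio o).Countable := by
  rw [← le_aleph0_iff_set_countable, Cardinal.mk_Iio_ordinal, lift_le_aleph0, ← lt_aleph_one_iff]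
  exact lt_ord.1 ho

theorem Ordinal.uncountable_Iio_ord_aleph_one : Uncountable (Iio (aleph 1).ord) := by
  rw [← aleph0_lt_mk_iff, Cardinal.mk_Iio_ordinal, card_ord, aleph0_lt_lift]
  exact aleph0_lt_aleph_one

namespace Stmt11

section

variable {X : Type*} [LinearOrder X] [TopologicalSpace X] [OrderTopology X]

theorem Ioc_mem_nhds_of_lt [WellFoundedLT X] [NoMaxOrder X] {a x : X} (h : a < x) :
    Ioc a x ∈ 𝓝 x := by
  let := SuccOrder.ofLinearWellFoundedLT X
  exact Order.Ioo_succ_right a x ▸ Ioo_mem_nhds h (Order.lt_succ x)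

def iocAssignment (S : X → Set X) : Set (X × X) := {p | ∀ β, p.1 ∈ S β → p.2 ∈ Ioc β p.1}

theorem isNbhdAssignment_iocAssignment [WellFoundedLT X] [NoMaxOrder X] {S : X → Set X}
    (hS : Pairwise (Disjoint on S)) (hSβ : ∀ β, S β ⊆ Ioi β) :
    IsNbhdAssignment (iocAssignment S) := by
  intro x
  by_cases hx : ∃ β, x ∈ S β
  · obtain ⟨β, hβ⟩ := hx
    refine Filter.mem_of_superset (Ioc_mem_nhds_of_lt (hSβ β hβ)) fun y hy β' hβ' => ?_
    obtain rfl : β' = β := by_contra fun hne => disjoint_left.1 (hS hne) hβ' hβ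
    exact hy
  · push Not at hx
    exact Filter.univ_mem' fun y β hβ => (hx β hβ).elim

theorem exists_isStationary_Ioc_subset [WellFoundedLT X] (hX : ℵ₀ < cof X)
    (hIio : ∀ x : X, #(Iio x) < cof X) {V : Set (X × X)} (hV : IsNbhdAssignment V) :
    ∃ γ, IsStationary {x | γ < x ∧ Ioc γ x ⊆ {y | (x, y) ∈ V}} := by
  have := noMaxOrder_of_aleph0_lt_cof hX
  obtain ⟨a⟩ := cof_ne_zero_iff.1 (aleph0_pos.trans hX).ne'
  choose! f hf hfV using fun x (hx : a < x) => exists_Ioc_subset_of_mem_nhds (hV x) ⟨a, hx⟩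
  obtain ⟨γ, hγ⟩ := (isStationary_Ioi a).exists_isStationary_inter_preimage_singleton hX hIio hf
  exact ⟨γ, hγ.mono fun x ⟨hax, hfx⟩ => hfx ▸ ⟨hf x hax, hfV x hax⟩⟩

theorem not_rcomp_subset_iocAssignment [WellFoundedLT X] (hX : ℵ₀ < cof X)
    (hIio : ∀ x : X, #(Iio x) < cof X) {S : X → Set X} (hSβ : ∀ β, S β ⊆ Ioi β)
    (hS : IsCofinal {β | IsStationary (S β)}) {V : Set (X × X)} (hV : IsNbhdAssignment V) :
    ¬ rcomp V V ⊆ iocAssignment S := by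
  intro hVU
  have := noMaxOrder_of_aleph0_lt_cof hX
  obtain ⟨γ, hγ⟩ := exists_isStationary_Ioc_subset hX hIio hV
  obtain ⟨β, hβ, hγβ⟩ : ∃ β, IsStationary (S β) ∧ γ < β := by
    obtain ⟨c, hγc⟩ := exists_gt γ
    obtain ⟨β, hβ, hcβ⟩ := hS c
    exact ⟨β, hβ, hγc.trans_le hcβ⟩
  obtain ⟨x, hxS, hxT⟩ := hβ (isClub_setOf_inter_Ioc_nonempty hγ.isCofinal)
  have hβx : β < x := hSβ β hxS
  obtain ⟨l, hlx, hlV⟩ := exists_Ioc_subset_of_mem_nhds (hV x) ⟨β, hβx⟩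
  obtain ⟨y, ⟨-, hyV⟩, hy, hyx⟩ := hxT (max l β) (max_lt hlx hβx)
  rw [max_lt_iff] at hy
  have hxβ : (x, β) ∈ rcomp V V := ⟨y, hlV ⟨hy.1, hyx⟩, hyV ⟨hγβ, hy.2.le⟩⟩
  exact lt_irrefl β (hVU hxβ β hxS).1

theorem exists_isNbhdAssignment_forall_not_rcomp_subset [WellFoundedLT X] [Uncountable X]
    (hIio : ∀ x : X, (Iio x).Countable) :
    ∃ U : Set (X × X), IsNbhdAssignment U ∧
      ∀ V : Set (X × X), IsNbhdAssignment V → ¬ rcomp V V ⊆ U := by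
  have hX := aleph0_lt_cof_of_countable_Iio hIio
  have := noMaxOrder_of_aleph0_lt_cof hX
  obtain ⟨S, hS, hSβ, hSstat⟩ := exists_pairwise_disjoint_isStationary hX hIio
  refine ⟨iocAssignment S, isNbhdAssignment_iocAssignment hS hSβ, fun V hV => ?_⟩
  exact not_rcomp_subset_iocAssignment hX
    (fun x => (le_aleph0_iff_set_countable.2 (hIio x)).trans_lt hX) hSβ hSstat hV

end

/-- On `X = ω₁` with the order topology there is a neighborhood assignment `U` such
that no neighborhood assignment `V` satisfies `VV ⊆ U`; hence the universal
pre-uniformity of `ω₁` is not equal to its square. -/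
theorem omega1_preUniformity_ne_square
    (X : Type*) [LinearOrder X] [TopologicalSpace X] [OrderTopology X]
    (e : X ≃o Set.Iio (Cardinal.aleph 1).ord) :
    ∃ U : Set (X × X), IsNbhdAssignment U ∧
      ∀ V : Set (X × X), IsNbhdAssignment V → ¬ rcomp V V ⊆ U := by
  have : WellFoundedLT X := e.toOrderEmbedding.wellFoundedLT
  have : Uncountable X := e.toEquiv.uncountable_iff.2 Ordinal.uncountable_Iio_ord_aleph_one
  refine exists_isNbhdAssignment_forall_not_rcomp_subset fun x => ?_
  have hx : Iio x = e ⁻¹' (Subtype.val ⁻¹' Iio (e x : Ordinal)) := by ext; simp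
  rw [hx]
  exact ((Ordinal.countable_Iio_of_lt_ord_aleph_one (e x).2).preimage
    Subtype.val_injective).preimage e.injective

end Stmt11
end

section
/- Every Q_ω-set X satisfies |X| < ℵ₀ · 2^{w(X)}, where w(X) is the weight of X. -/
/-!
A Cantor diagonal argument. Given a map `s` from `X` to increasing sequences of closed sets,
rank each point `x` by one more than the first `n` with `x ∈ s x n`; the `Q_ω` property turns
this ranking into an increasing closed cover that `s` misses. So `|X|` is smaller than the
number of increasing sequences of closed sets, which is at most `(2^w)^ℵ₀ = 2^w` when the
weight `w` is infinite, and at most `ℵ₀` when it is finite, since then there are finitely many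
closed sets and increasing sequences of them are eventually constant.
-/

open Cardinal

namespace Stmt12

universe u

variable (X : Type u) [TopologicalSpace X]

/-- `X` is a `Q_ω`-set: for every increasing sequence of subsets covering `X` there is a
covering sequence of closed subsets refining it. -/
def IsQOmegaSet : Prop :=
  ∀ Xn : ℕ → Set X, Monotone Xn → (⋃ n, Xn n) = Set.univ →
    ∃ F : ℕ → Set X, (∀ n, IsClosed (F n) ∧ F n ⊆ Xn n) ∧ (⋃ n, F n) = Set.univ

/-- The weight of `X`: the least cardinality of a base of the topology. -/
noncomputable def weight : Cardinal.{u} :=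
  sInf {κ | ∃ B : Set (Set X), TopologicalSpace.IsTopologicalBasis B ∧ #B = κ}

open Function TopologicalSpace

theorem countable_nat_orderHom_of_finite (α : Type*) [PartialOrder α] [Finite α] :
    Countable (ℕ →o α) := by
  choose N hN using fun f : ℕ →o α => WellFoundedGT.monotone_chain_condition f
  refine Injective.countable (f := fun f => (List.range (N f + 1)).map f) fun f g hfg => ?_
  have hNfg : N f = N g := by simpa using congrArg List.length hfg
  simp only [← hNfg] at hfg
  have hle : ∀ k ≤ N f, f k = g k := fun k hk =>
    List.map_inj_left.1 hfg k (List.mem_range.2 (Nat.lt_succ_of_le hk))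
  refine DFunLike.ext f g fun k => ?_
  rcases le_total k (N f) with hk | hk
  · exact hle k hk
  · rw [← hN f k hk, hle _ le_rfl, hNfg, hN g k (hNfg ▸ hk)]

theorem exists_isTopologicalBasis_mk_eq_weight :
    ∃ B : Set (Set X), IsTopologicalBasis B ∧ #B = weight X :=
  csInf_mem (s := {κ | ∃ B : Set (Set X), IsTopologicalBasis B ∧ #B = κ})
    ⟨_, _, isTopologicalBasis_opens, rfl⟩

theorem mk_closeds_le_two_power_weight : #(Closeds X) ≤ 2 ^ weight X := by
  obtain ⟨B, hB, hBw⟩ := exists_isTopologicalBasis_mk_eq_weight X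
  let basicOpensOff (C : Closeds X) : 𝒫 B :=
    ⟨{s | s ∈ B ∧ s ⊆ (C : Set X)ᶜ}, fun _ hs => hs.1⟩
  have hinj : Injective basicOpensOff := fun C D h => by
    have hcompl : (C : Set X)ᶜ = (D : Set X)ᶜ := by
      rw [hB.open_eq_sUnion' C.isClosed.isOpen_compl, hB.open_eq_sUnion' D.isClosed.isOpen_compl]
      exact congrArg (fun s : 𝒫 B => ⋃₀ (s : Set (Set X))) h
    exact Closeds.ext (compl_injective hcompl)
  calc #(Closeds X) ≤ #(𝒫 B) := mk_le_of_injective hinj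
    _ = 2 ^ weight X := by rw [mk_powerset, hBw]

theorem mk_nat_orderHom_closeds_le : #(ℕ →o Closeds X) ≤ ℵ₀ * 2 ^ weight X := by
  rcases lt_or_ge (weight X) ℵ₀ with hw | hw
  · have : Finite (Closeds X) := lt_aleph0_iff_finite.1 <|
      (mk_closeds_le_two_power_weight X).trans_lt (power_lt_aleph0 natCast_lt_aleph0 hw)
    have := countable_nat_orderHom_of_finite (Closeds X)
    exact mk_le_aleph0.trans (le_mul_right (power_ne_zero _ two_ne_zero))
  · calc #(ℕ →o Closeds X)
        ≤ #(ℕ → Closeds X) := mk_le_of_injective DFunLike.coe_injective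
      _ = #(Closeds X) ^ ℵ₀ := by simp
      _ ≤ (2 ^ weight X) ^ ℵ₀ := power_le_power_right (mk_closeds_le_two_power_weight X)
      _ = 2 ^ weight X := by rw [← power_mul, mul_aleph0_eq hw]
      _ ≤ ℵ₀ * 2 ^ weight X := le_mul_left aleph0_ne_zero

variable {X}

theorem IsQOmegaSet.exists_monotone_closeds_cover_le (hQ : IsQOmegaSet X) (φ : X → ℕ) :
    ∃ F : ℕ →o Closeds X, (∀ x, ∃ n, x ∈ F n) ∧ ∀ n, ∀ x ∈ F n, φ x ≤ n := by
  obtain ⟨F, hF, hcover⟩ := hQ (fun n => {x | φ x ≤ n}) (fun _ _ hmn _ hx => hx.trans hmn)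
    (Set.iUnion_eq_univ_iff.2 fun x => ⟨φ x, le_refl (φ x)⟩)
  let G : ℕ → Closeds X := fun n => ⟨F n, (hF n).1⟩
  refine ⟨partialSups G, fun x => ?_, fun n => ?_⟩
  · obtain ⟨n, hn⟩ := Set.iUnion_eq_univ_iff.1 hcover x
    exact ⟨n, le_partialSups G n hn⟩
  · refine (partialSups_iff_forall (fun C : Closeds X => (C : Set X) ⊆ {x | φ x ≤ n}) ?_).2 ?_
    · simp only [Closeds.coe_sup, Set.union_subset_iff, implies_true]
    · exact fun k hk x hx => ((hF k).2 hx).trans hk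

theorem IsQOmegaSet.not_surjective (hQ : IsQOmegaSet X) (s : X → ℕ →o Closeds X) :
    ¬ Surjective s := by
  classical
  intro hs
  let φ : X → ℕ := fun x => if h : ∃ n, x ∈ s x n then Nat.find h + 1 else 0
  obtain ⟨F, hcover, hφ⟩ := hQ.exists_monotone_closeds_cover_le φ
  obtain ⟨x, rfl⟩ := hs F
  have hx : ∃ n, x ∈ s x n := hcover x
  have hrank := hφ _ x (Nat.find_spec hx)
  simp [φ, hx] at hrank

theorem IsQOmegaSet.mk_lt (hQ : IsQOmegaSet X) : #X < #(ℕ →o Closeds X) := by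
  by_contra! h
  obtain ⟨e⟩ := h
  exact hQ.not_surjective _ (invFun_surjective e.injective)

/-- Every `Q_ω`-set `X` satisfies `|X| < ℵ₀ · 2^{w(X)}`. -/
theorem card_lt_of_QOmegaSet (hQ : IsQOmegaSet X) :
    #X < Cardinal.aleph0 * 2 ^ weight X :=
  hQ.mk_lt.trans_le (mk_nat_orderHom_closeds_le X)

end Stmt12
end

section
/- Every metrizable Q_ω-set X is perfectly meager: every crowded (without isolated points) subspace Z ⊆ X is meager in itself. -/
/-! A crowded metrizable space is the union of an increasing sequence of sets with empty
interior: if `D` is the union of closed nowhere dense sets `S n` (maximal `1/(n+1)`-separated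
sets) and is dense, take `A n = Dᶜ ∪ S 0 ∪ ⋯ ∪ S n`, whose complement `D \ (S 0 ∪ ⋯ ∪ S n)` is
still dense. Being a `Q_ω`-set passes to subspaces, so a crowded subspace `Z` is covered by closed
sets `F n ⊆ A n`; these are nowhere dense, hence `Z` is meagre in itself. -/

namespace Stmt13

variable (X : Type*) [TopologicalSpace X]

def IsQOmegaSet : Prop :=
  ∀ Xn : ℕ → Set X, Monotone Xn → (⋃ n, Xn n) = Set.univ →
    ∃ F : ℕ → Set X, (∀ n, IsClosed (F n) ∧ F n ⊆ Xn n) ∧ (⋃ n, F n) = Set.univ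

open Set Filter Topology Metric
open scoped NNReal ENNReal

section Separated

variable {Y : Type*}

lemma exists_maximal_isSeparated [PseudoEMetricSpace Y] (ε : ℝ≥0∞) (s : Set Y) :
    ∃ N, Maximal (fun N ↦ N ⊆ s ∧ IsSeparated ε N) N :=
  zorn_subset _ fun c hcs hc ↦
    ⟨⋃₀ c, ⟨sUnion_subset fun _ hN ↦ (hcs hN).1, hc.pairwise_sUnion.2 fun _ hN ↦ (hcs hN).2⟩,
      fun _ ↦ subset_sUnion_of_mem⟩

lemma IsSeparated.isClosed [EMetricSpace Y] {ε : ℝ≥0∞} {s : Set Y} (hε : ε ≠ 0)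
    (hs : IsSeparated ε s) : IsClosed s :=
  isClosed_of_spaced_out (edist_mem_uniformity hε.bot_lt) <|
    hs.imp fun _ _ h ↦ (h.le.not_gt : ¬ _)

lemma IsSeparated.interior_eq_empty [PseudoEMetricSpace Y] [∀ y : Y, (𝓝[≠] y).NeBot]
    {ε : ℝ≥0∞} {s : Set Y} (hε : ε ≠ 0) (hs : IsSeparated ε s) : interior s = ∅ := by
  refine eq_empty_of_forall_notMem fun x hx ↦ ?_
  have hnhds : interior s ∩ eball x ε ∈ 𝓝[≠] x := mem_nhdsWithin_of_mem_nhds <|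
    inter_mem (isOpen_interior.mem_nhds hx) (eball_mem_nhds x hε.bot_lt)
  obtain ⟨y, ⟨hys, hyx⟩, hy⟩ := Filter.nonempty_of_mem (inter_mem hnhds self_mem_nhdsWithin)
  exact (hs (interior_subset hys) (interior_subset hx) hy).not_gt hyx

lemma dense_iUnion_of_forall_isCover [PseudoEMetricSpace Y] {ι : Type*} {N : ι → Set Y}
    (hN : ∀ ε : ℝ≥0, 0 < ε → ∃ i, IsCover ε univ (N i)) : Dense (⋃ i, N i) := by
  refine fun x ↦ EMetric.mem_closure_iff.2 fun r hr ↦ ?_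
  obtain ⟨ε, hε, hεr⟩ := ENNReal.lt_iff_exists_nnreal_btwn.1 hr
  obtain ⟨i, hi⟩ := hN ε (ENNReal.coe_pos.1 hε)
  obtain ⟨y, hy, hxy⟩ := hi (mem_univ x)
  exact ⟨y, mem_iUnion.2 ⟨i, hy⟩, lt_of_le_of_lt hxy hεr⟩

lemma exists_isCover_isClosed_isNowhereDense [EMetricSpace Y] [∀ y : Y, (𝓝[≠] y).NeBot]
    {ε : ℝ≥0} (hε : ε ≠ 0) : ∃ N : Set Y, IsCover ε univ N ∧ IsClosed N ∧ IsNowhereDense N := by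
  obtain ⟨N, hN⟩ := exists_maximal_isSeparated (ε : ℝ≥0∞) (univ : Set Y)
  have hε' : (ε : ℝ≥0∞) ≠ 0 := ENNReal.coe_ne_zero.2 hε
  have hclosed := IsSeparated.isClosed hε' hN.prop.2
  exact ⟨N, .of_maximal_isSeparated hN, hclosed,
    hclosed.isNowhereDense_iff.2 (IsSeparated.interior_eq_empty hε' hN.prop.2)⟩

lemma exists_isClosed_isNowhereDense_dense_iUnion [EMetricSpace Y] [∀ y : Y, (𝓝[≠] y).NeBot] :
    ∃ S : ℕ → Set Y, (∀ n, IsClosed (S n) ∧ IsNowhereDense (S n)) ∧ Dense (⋃ n, S n) := by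
  choose S hS using fun n : ℕ ↦
    exists_isCover_isClosed_isNowhereDense (Y := Y) (ε := 1 / (n + 1)) (by positivity)
  refine ⟨S, fun n ↦ (hS n).2, dense_iUnion_of_forall_isCover fun ε hε ↦ ?_⟩
  obtain ⟨n, hn⟩ := exists_nat_one_div_lt hε
  exact ⟨n, (hS n).1.mono_radius hn.le⟩

end Separated

section NowhereDense

variable {Y : Type*} [TopologicalSpace Y]

lemma isClosed_isNowhereDense_accumulate {S : ℕ → Set Y}
    (hS : ∀ n, IsClosed (S n) ∧ IsNowhereDense (S n)) (n : ℕ) :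
    IsClosed (accumulate S n) ∧ IsNowhereDense (accumulate S n) := by
  induction n with
  | zero => simpa [accumulate] using hS 0
  | succ n ih =>
    rw [accumulate_succ]
    have hclosed := ih.1.union (hS (n + 1)).1
    refine ⟨hclosed, hclosed.isNowhereDense_iff.2 ?_⟩
    rw [interior_union_isClosed_of_interior_empty ih.1
      ((hS (n + 1)).1.isNowhereDense_iff.1 (hS (n + 1)).2)]
    exact ih.1.isNowhereDense_iff.1 ih.2

lemma exists_monotone_iUnion_eq_univ_interior_eq_empty {S : ℕ → Set Y}
    (hS : ∀ n, IsClosed (S n) ∧ IsNowhereDense (S n)) (hD : Dense (⋃ n, S n)) :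
    ∃ A : ℕ → Set Y, Monotone A ∧ (⋃ n, A n) = univ ∧ ∀ n, interior (A n) = ∅ := by
  refine ⟨fun n ↦ (⋃ k, S k)ᶜ ∪ accumulate S n, fun m n hmn ↦ ?_, ?_, fun n ↦ ?_⟩
  · exact union_subset_union_right _ (monotone_accumulate hmn)
  · rw [← union_iUnion, iUnion_accumulate, compl_union_self]
  · obtain ⟨hopen, hdense⟩ :=
      isClosed_isNowhereDense_iff_compl.1 (isClosed_isNowhereDense_accumulate hS n)
    rw [interior_eq_empty_iff_dense_compl, compl_union, compl_compl]
    exact hD.inter_of_isOpen_right hdense hopen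

end NowhereDense

namespace IsQOmegaSet

variable {X}

lemma subtype (hQ : IsQOmegaSet X) (Z : Set X) : IsQOmegaSet Z := by
  intro Zn hmono hcover
  obtain ⟨F, hF, hFcover⟩ := hQ (fun n ↦ Zᶜ ∪ Subtype.val '' Zn n)
    (fun m n hmn ↦ union_subset_union_right _ (image_mono (hmono hmn)))
    (by
      refine eq_univ_of_forall fun x ↦ ?_
      by_cases hx : x ∈ Z
      · obtain ⟨n, hn⟩ := mem_iUnion.1 (hcover ▸ mem_univ (⟨x, hx⟩ : Z))
        exact mem_iUnion.2 ⟨n, Or.inr ⟨_, hn, rfl⟩⟩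
      · exact mem_iUnion.2 ⟨0, Or.inl hx⟩)
  refine ⟨fun n ↦ Subtype.val ⁻¹' F n, fun n ↦ ⟨(hF n).1.preimage continuous_subtype_val, ?_⟩, ?_⟩
  · rintro z hz
    rcases (hF n).2 hz with hzZ | ⟨w, hw, hwz⟩
    · exact absurd z.2 hzZ
    · rwa [← Subtype.val_injective hwz]
  · rw [← preimage_iUnion, hFcover, preimage_univ]

lemma isMeagre_univ (hQ : IsQOmegaSet X) {A : ℕ → Set X} (hmono : Monotone A)
    (hcover : (⋃ n, A n) = univ) (hA : ∀ n, interior (A n) = ∅) : IsMeagre (univ : Set X) := by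
  obtain ⟨F, hF, hFcover⟩ := hQ A hmono hcover
  rw [← hFcover]
  refine isMeagre_iUnion fun n ↦ IsNowhereDense.isMeagre ?_
  rw [(hF n).1.isNowhereDense_iff]
  exact subset_empty_iff.1 (hA n ▸ interior_mono (hF n).2)

end IsQOmegaSet

/-- Every metrizable `Q_ω`-set is perfectly meager: every crowded subspace (one without
isolated points) is meager in itself. -/
theorem perfectlyMeager_of_metrizable_QOmegaSet [TopologicalSpace.MetrizableSpace X]
    (hQ : IsQOmegaSet X) (Z : Set X) (hZ : ∀ z : Z, ¬ IsOpen ({z} : Set Z)) :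
    IsMeagre (Set.univ : Set Z) := by
  let : MetricSpace Z := TopologicalSpace.metrizableSpaceMetric Z
  have : ∀ z : Z, (𝓝[≠] z).NeBot := fun z ↦
    ⟨fun h ↦ hZ z ((isOpen_singleton_iff_punctured_nhds z).2 h)⟩
  obtain ⟨S, hS, hD⟩ := exists_isClosed_isNowhereDense_dense_iUnion (Y := Z)
  obtain ⟨A, hmono, hcover, hA⟩ := exists_monotone_iUnion_eq_univ_interior_eq_empty hS hD
  exact (hQ.subtype Z).isMeagre_univ hmono hcover hA

end Stmt13
end

section
/- Every metrizable space X satisfies q𝒰_X = 𝔭𝒰_X²: for every neighborhood assignment U on X there exists a sequence (V_k)_{k∈ω} of neighborhood assignments with V_{k+1}V_{k+1} ⊆ V_k for all k and V₀ ⊆ UU. In particular UU belongs to the universal quasi-uniformity of X. -/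
namespace Stmt14

variable {X : Type*} [TopologicalSpace X]

def rcomp (U V : Set (X × X)) : Set (X × X) := {p | ∃ y, (p.1, y) ∈ U ∧ (y, p.2) ∈ V}

def IsNbhdAssignment (U : Set (X × X)) : Prop := ∀ x : X, {y | (x, y) ∈ U} ∈ nhds x

section Aux

variable {Y : Type*} [MetricSpace Y]

open scoped Classical

private lemma min_one_add {a b c : ℝ} (h : a ≤ b + c) (hc : 0 ≤ c) :
    min 1 a ≤ min 1 b + c := by
  rcases le_total b 1 with hb | hb
  · rw [min_eq_right hb]; exact le_trans (min_le_right _ _) h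
  · rw [min_eq_left hb]; exact le_trans (min_le_left _ _) (by linarith)

/-- `X_n`: points whose `3^{-n}`-ball is inside the `U`-ball. -/
def Xs (U : Set (Y × Y)) (n : ℕ) : Set Y :=
  {x | ∀ y, dist x y < (1/3 : ℝ) ^ n → (x, y) ∈ U}

/-- `C n = closure (X_n)`. -/
def Cs (U : Set (Y × Y)) (n : ℕ) : Set Y := closure (Xs U n)

lemma Xs_mono (U : Set (Y × Y)) {n m : ℕ} (h : n ≤ m) : Xs U n ⊆ Xs U m := by
  intro x hx y hy
  exact hx y (lt_of_lt_of_le hy (pow_le_pow_of_le_one (by norm_num) (by norm_num) h))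

lemma Cs_mono (U : Set (Y × Y)) {n m : ℕ} (h : n ≤ m) : Cs U n ⊆ Cs U m :=
  closure_mono (Xs_mono U h)

lemma exists_mem_Xs (U : Set (Y × Y)) (hU : ∀ x : Y, {y | (x, y) ∈ U} ∈ nhds x) (x : Y) :
    ∃ n, x ∈ Xs U n := by
  obtain ⟨ε, hε, hball⟩ := Metric.mem_nhds_iff.1 (hU x)
  obtain ⟨n, hn⟩ := exists_pow_lt_of_lt_one hε (by norm_num : (1/3 : ℝ) < 1)
  refine ⟨n, fun y hy => hball ?_⟩
  rw [Metric.mem_ball, dist_comm]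
  exact lt_trans hy hn

lemma exists_mem_Cs (U : Set (Y × Y)) (hU : ∀ x : Y, {y | (x, y) ∈ U} ∈ nhds x) (x : Y) :
    ∃ n, x ∈ Cs U n := by
  obtain ⟨n, hn⟩ := exists_mem_Xs U hU x
  exact ⟨n, subset_closure hn⟩

variable (U : Set (Y × Y)) (hU : ∀ x : Y, {y | (x, y) ∈ U} ∈ nhds x)

/-- Minimal `n` with `x ∈ closure (X_n)`. -/
noncomputable def nn (x : Y) : ℕ := Nat.find (exists_mem_Cs U hU x)

lemma nn_spec (x : Y) : x ∈ Cs U (nn U hU x) := Nat.find_spec (exists_mem_Cs U hU x)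

lemma nn_min {x : Y} {m : ℕ} (hm : m < nn U hU x) : x ∉ Cs U m :=
  Nat.find_min (exists_mem_Cs U hU x) hm

/-- Truncated distance to `closure (X_n)`, with value 1 for the empty set. -/
noncomputable def Ee (x : Y) (n : ℕ) : ℝ :=
  if (Cs U n).Nonempty then min 1 (Metric.infDist x (Cs U n)) else 1

lemma Ee_le_one (x : Y) (n : ℕ) : Ee U x n ≤ 1 := by
  unfold Ee; split_ifs
  · exact min_le_left _ _
  · exact le_refl 1

lemma Ee_anti (x : Y) {n m : ℕ} (h : n ≤ m) : Ee U x m ≤ Ee U x n := by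
  unfold Ee
  by_cases hn : (Cs U n).Nonempty
  · have hm : (Cs U m).Nonempty := hn.mono (Cs_mono U h)
    rw [if_pos hn, if_pos hm]
    exact min_le_min le_rfl (Metric.infDist_le_infDist_of_subset (Cs_mono U h) hn)
  · rw [if_neg hn]
    split_ifs with hm
    · exact min_le_left _ _
    · exact le_refl 1

lemma Ee_triangle (x y : Y) (n : ℕ) : Ee U y n ≤ Ee U x n + dist x y := by
  unfold Ee
  split_ifs with h
  · have h1 : Metric.infDist y (Cs U n) ≤ Metric.infDist x (Cs U n) + dist x y := by
      rw [dist_comm]; exact Metric.infDist_le_infDist_add_dist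
    exact le_trans (min_le_min le_rfl h1) (min_one_add le_rfl dist_nonneg)
  · linarith [dist_nonneg (x := x) (y := y)]

lemma Ee_pos {x : Y} {n : ℕ} (hx : x ∉ Cs U n) : 0 < Ee U x n := by
  unfold Ee
  split_ifs with h
  · refine lt_min one_pos ?_
    have hcl : IsClosed (Cs U n) := isClosed_closure
    exact (hcl.notMem_iff_infDist_pos h).1 hx
  · exact one_pos

/-- The key radius-control function. -/
noncomputable def mm (x : Y) : ℝ :=
  min ((1/3 : ℝ) ^ (nn U hU x)) (if nn U hU x = 0 then 1 else Ee U x (nn U hU x - 1))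

lemma mm_pos (x : Y) : 0 < mm U hU x := by
  refine lt_min (pow_pos (by norm_num) _) ?_
  split_ifs with h
  · exact one_pos
  · exact Ee_pos U (nn_min U hU (Nat.sub_lt (Nat.pos_of_ne_zero h) one_pos))

lemma mm_le_pow (x : Y) : mm U hU x ≤ (1/3 : ℝ) ^ (nn U hU x) := min_le_left _ _

lemma mm_le_one (x : Y) : mm U hU x ≤ 1 :=
  le_trans (mm_le_pow U hU x) (pow_le_one₀ (by norm_num) (by norm_num))

lemma mm_key {x y : Y} (h : dist x y < mm U hU x) : mm U hU y ≤ 2 * mm U hU x := by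
  set nx := nn U hU x with hnx
  set ny := nn U hU y with hny
  rcases lt_or_ge ny nx with hc | hc
  · -- impossible: y ∈ Cs ny ⊆ Cs (nx - 1), so x is close to Cs (nx-1)
    exfalso
    have hy : y ∈ Cs U (nx - 1) := Cs_mono U (Nat.le_sub_one_of_lt hc) (nn_spec U hU y)
    have hne : (Cs U (nx - 1)).Nonempty := ⟨y, hy⟩
    have hnx0 : nx ≠ 0 := by omega
    have h1 : mm U hU x ≤ Ee U x (nx - 1) := by
      rw [mm, ← hnx, if_neg hnx0]; exact min_le_right _ _
    rw [Ee, if_pos hne] at h1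
    have h2 : Metric.infDist x (Cs U (nx - 1)) ≤ dist x y :=
      Metric.infDist_le_dist_of_mem hy
    have h3 : mm U hU x ≤ dist x y := le_trans h1 (le_trans (min_le_right _ _) h2)
    linarith
  · rcases Nat.eq_zero_or_pos nx with h0 | hpos
    · have h1 : mm U hU x = 1 := by
        rw [mm, ← hnx, h0]; simp
      rw [h1]
      linarith [mm_le_one U hU y]
    · have hny1 : 1 ≤ ny := le_trans hpos hc
      have hx0 : nx ≠ 0 := Nat.pos_iff_ne_zero.mp hpos
      have hy0 : ny ≠ 0 := Nat.pos_iff_ne_zero.mp hny1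
      have step1 : mm U hU y ≤ min ((1/3 : ℝ) ^ nx) (Ee U y (nx - 1)) := by
        rw [mm, ← hny, if_neg hy0]
        exact min_le_min (pow_le_pow_of_le_one (by norm_num) (by norm_num) hc)
          (Ee_anti U y (Nat.sub_le_sub_right hc 1))
      have step2 : Ee U y (nx - 1) ≤ Ee U x (nx - 1) + dist x y := Ee_triangle U x y _
      have step3 : min ((1/3 : ℝ) ^ nx) (Ee U y (nx - 1)) ≤
          min ((1/3 : ℝ) ^ nx) (Ee U x (nx - 1)) + dist x y := by
        refine le_trans (min_le_min le_rfl step2) ?_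
        rw [← min_add_add_right]
        exact min_le_min (by linarith [dist_nonneg (x := x) (y := y)]) le_rfl
      have hmx : mm U hU x = min ((1/3 : ℝ) ^ nx) (Ee U x (nx - 1)) := by
        rw [mm, ← hnx, if_neg hx0]
      rw [hmx]
      calc mm U hU y ≤ min ((1/3 : ℝ) ^ nx) (Ee U x (nx - 1)) + dist x y :=
            le_trans step1 step3
        _ ≤ 2 * min ((1/3 : ℝ) ^ nx) (Ee U x (nx - 1)) := by rw [← hmx] at *; linarith

theorem key_metric (U : Set (Y × Y)) (hU : ∀ x : Y, {y | (x, y) ∈ U} ∈ nhds x) :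
    ∃ V : ℕ → Set (Y × Y), (∀ k, IsNbhdAssignment (V k)) ∧
      (∀ k, rcomp (V (k + 1)) (V (k + 1)) ⊆ V k) ∧ V 0 ⊆ rcomp U U := by
  refine ⟨fun k => {p | dist p.1 p.2 < (1/3 : ℝ) ^ (k + 1) * mm U hU p.1}, ?_, ?_, ?_⟩
  · intro k x
    have heq : {y | (x, y) ∈ {p : Y × Y | dist p.1 p.2 < (1/3 : ℝ) ^ (k + 1) * mm U hU p.1}}
        = Metric.ball x ((1/3 : ℝ) ^ (k + 1) * mm U hU x) := by
      ext y; simp [Metric.mem_ball, dist_comm]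
    show {y | (x, y) ∈ _} ∈ nhds x
    rw [heq]
    exact Metric.ball_mem_nhds x
      (mul_pos (pow_pos (by norm_num) _) (mm_pos U hU x))
  · rintro k ⟨x, z⟩ ⟨y, hxy, hyz⟩
    simp only [Set.mem_setOf_eq] at *
    have hmy : mm U hU y ≤ 2 * mm U hU x := by
      refine mm_key U hU (lt_of_lt_of_le hxy ?_)
      calc (1/3 : ℝ) ^ (k + 2) * mm U hU x ≤ 1 * mm U hU x := by
            have := mm_pos U hU x
            have : (1/3 : ℝ) ^ (k + 2) ≤ 1 := pow_le_one₀ (by norm_num) (by norm_num)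
            nlinarith [mm_pos U hU x]
        _ = mm U hU x := one_mul _
    calc dist x z ≤ dist x y + dist y z := dist_triangle x y z
      _ < (1/3 : ℝ) ^ (k + 2) * mm U hU x + (1/3 : ℝ) ^ (k + 2) * mm U hU y := by linarith
      _ ≤ (1/3 : ℝ) ^ (k + 2) * (3 * mm U hU x) := by nlinarith [pow_pos (by norm_num : (0:ℝ) < 1/3) (k + 2)]
      _ = (1/3 : ℝ) ^ (k + 1) * mm U hU x := by ring
  · rintro ⟨x, y⟩ hxy
    simp only [Set.mem_setOf_eq] at hxy
    obtain ⟨N, hN⟩ := exists_mem_Xs U hU x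
    set nx := nn U hU x with hnxdef
    have hcl : x ∈ closure (Xs U nx) := nn_spec U hU x
    have hεpos : 0 < min ((1/3 : ℝ) ^ N) ((1/3 : ℝ) ^ (nx + 1)) :=
      lt_min (pow_pos (by norm_num) _) (pow_pos (by norm_num) _)
    obtain ⟨z, hz, hdz⟩ := Metric.mem_closure_iff.1 hcl _ hεpos
    refine ⟨z, hN z (lt_of_lt_of_le hdz (min_le_left _ _)), ?_⟩
    refine hz y ?_
    have h1 : dist x z < (1/3 : ℝ) ^ (nx + 1) := lt_of_lt_of_le hdz (min_le_right _ _)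
    have h2 : dist x y < (1/3 : ℝ) ^ 1 * (1/3 : ℝ) ^ nx :=
      lt_of_lt_of_le hxy (by nlinarith [mm_le_pow U hU x, pow_pos (by norm_num : (0:ℝ) < 1/3) 1])
    have h3 : (1/3 : ℝ) ^ 1 * (1/3 : ℝ) ^ nx = (1/3 : ℝ) ^ (nx + 1) := by ring
    calc dist z y ≤ dist z x + dist x y := dist_triangle z x y
      _ < (1/3 : ℝ) ^ (nx + 1) + (1/3 : ℝ) ^ (nx + 1) := by
          rw [dist_comm z x]; rw [h3] at h2; linarith
      _ ≤ (1/3 : ℝ) ^ nx := by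
          have : (1/3 : ℝ) ^ (nx + 1) = (1/3 : ℝ) ^ nx / 3 := by ring
          rw [this]; linarith [pow_pos (by norm_num : (0:ℝ) < 1/3) nx]

end Aux

/-- In a metrizable space, for every neighborhood assignment `U` there is a sequence
`(V_k)` of neighborhood assignments with `V_{k+1}V_{k+1} ⊆ V_k` and `V₀ ⊆ UU`; hence
`UU` belongs to the universal quasi-uniformity and `q𝒰_X = 𝔭𝒰_X²`. -/
theorem metrizable_quasiUniformity_eq_sq_preUniformity
    [TopologicalSpace.MetrizableSpace X]
    (U : Set (X × X)) (hU : IsNbhdAssignment U) :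
    ∃ V : ℕ → Set (X × X), (∀ k, IsNbhdAssignment (V k)) ∧
      (∀ k, rcomp (V (k + 1)) (V (k + 1)) ⊆ V k) ∧ V 0 ⊆ rcomp U U := by
  letI : MetricSpace X := TopologicalSpace.metrizableSpaceMetric X
  exact key_metric U hU

end Stmt14
end

section
/- For every topological space X, ℓ^{∧1}(X) ≤ s(X): for every neighborhood assignment V on X there exists a subset A ⊆ X such that A is a discrete subspace of X and X = B(A; V ∪ V⁻¹), i.e., every point of X lies in B(a;V) ∪ B(a;V⁻¹) for some a ∈ A. Consequently the smallest such cardinal is at most the spread s(X). -/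
open Cardinal

namespace Stmt15

universe u

variable {X : Type u} [TopologicalSpace X]

def IsNbhdAssignment (U : Set (X × X)) : Prop := ∀ x : X, {y | (x, y) ∈ U} ∈ nhds x

/-- `ℓ^{∧1}(X) ≤ s(X)`: for every neighborhood assignment `V` there is a discrete
subspace `A` with `X = B(A; V ∪ V⁻¹)`; consequently if `κ` bounds the cardinalities of
discrete subspaces of `X` (the spread), such `A` can be found with `#A ≤ κ`. -/
theorem ellWedgeOne_le_spread (κ : Cardinal.{u})
    (hκ : ∀ D : Set X, DiscreteTopology D → #D ≤ κ)
    (V : Set (X × X)) (hV : IsNbhdAssignment V) :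
    ∃ A : Set X, DiscreteTopology A ∧ #A ≤ κ ∧
      ∀ x : X, ∃ a ∈ A, (a, x) ∈ V ∨ (x, a) ∈ V := by
  -- property: pairwise separated
  set P : Set X → Prop := fun S => ∀ a ∈ S, ∀ b ∈ S, a ≠ b → (a, b) ∉ V ∧ (b, a) ∉ V with hP
  obtain ⟨A, hPA, hmax⟩ : ∃ A, P A ∧ ∀ S, P S → A ⊆ S → S ⊆ A := by
    have hz : ∀ c ⊆ {S | P S}, IsChain (· ⊆ ·) c → ∃ ub ∈ {S | P S}, ∀ s ∈ c, s ⊆ ub := by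
      intro c hc hchain
      refine ⟨⋃₀ c, ?_, fun s hs => Set.subset_sUnion_of_mem hs⟩
      rintro a ⟨s, hs, has⟩ b ⟨t, ht, hbt⟩ hab
      rcases hchain.total hs ht with h | h
      · exact hc ht a (h has) b hbt hab
      · exact hc hs a has b (h hbt) hab
    obtain ⟨A, hA⟩ := zorn_subset {S | P S} hz
    exact ⟨A, hA.1, fun S hS hAS => hA.2 hS hAS⟩
  have hdiag : ∀ x : X, (x, x) ∈ V := fun x => show x ∈ {y | (x, y) ∈ V} from mem_of_mem_nhds (hV x)
  have hdisc : DiscreteTopology A := by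
    rw [discreteTopology_subtype_iff]
    intro a ha
    rw [nhdsWithin, inf_assoc, Filter.inf_principal, Filter.inf_principal_eq_bot, Set.compl_inter, compl_compl]
    apply Filter.mem_of_superset (hV a)
    intro y hy
    by_cases hya : y = a
    · exact Or.inl (hya ▸ rfl)
    · exact Or.inr fun hyA => (hPA a ha y hyA (Ne.symm hya)).1 hy
  refine ⟨A, hdisc, hκ A hdisc, fun x => ?_⟩
  by_contra hx
  push_neg at hx
  have hxA : x ∉ A := fun h => (hx x h).1 (hdiag x)
  have : insert x A ⊆ A := by
    apply hmax _ _ (Set.subset_insert x A)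
    rintro a (rfl | ha) b (rfl | hb) hab
    · exact absurd rfl hab
    · exact ⟨fun h => (hx b hb).2 h, fun h => (hx b hb).1 h⟩
    · exact ⟨fun h => (hx a ha).1 h, fun h => (hx a ha).2 h⟩
    · exact hPA a ha b hb hab
  exact hxA (this (Set.mem_insert x A))

end Stmt15
end

section
/- For every topological space X: for every neighborhood assignment V on X there exists a subset A ⊆ X with |A| ≤ nw(X) such that every x ∈ X satisfies (a,x) ∈ V ∩ V⁻¹ for some a ∈ A; that is, ℓ^{∨1}(X) ≤ nw(X), where nw(X) is the network weight of X. -/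
open Cardinal

namespace Stmt16

universe u

variable {X : Type u} [TopologicalSpace X]

def IsNbhdAssignment (U : Set (X × X)) : Prop := ∀ x : X, {y | (x, y) ∈ U} ∈ nhds x

/-- A network for `X`: for every point `x` and neighborhood `W` of `x` there is a member
`N` of the family with `x ∈ N ⊆ W`. -/
def IsNetwork (𝒩 : Set (Set X)) : Prop :=
  ∀ x : X, ∀ W ∈ nhds x, ∃ N ∈ 𝒩, x ∈ N ∧ N ⊆ W

/-- `ℓ^{∨1}(X) ≤ nw(X)`: if `X` has a network of cardinality `≤ κ`, then for every
neighborhood assignment `V` there is a set `A` with `#A ≤ κ` such that every `x ∈ X`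
satisfies `(a,x) ∈ V ∩ V⁻¹` for some `a ∈ A`. -/
theorem ellVeeOne_le_networkWeight (κ : Cardinal.{u})
    (𝒩 : Set (Set X)) (h𝒩 : IsNetwork 𝒩) (hcard : #𝒩 ≤ κ)
    (V : Set (X × X)) (hV : IsNbhdAssignment V) :
    ∃ A : Set X, #A ≤ κ ∧ ∀ x : X, ∃ a ∈ A, (a, x) ∈ V ∧ (x, a) ∈ V := by
  have hex : ∀ x : X, ∃ N ∈ 𝒩, x ∈ N ∧ N ⊆ {y | (x, y) ∈ V} := fun x =>
    h𝒩 x _ (hV x)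
  choose F hF hxF hFV using hex
  -- representative of each value of F
  have hrep : ∀ s : Set.range F, ∃ a : X, F a = s := fun s => s.2
  choose g hg using hrep
  refine ⟨Set.range g, ?_, ?_⟩
  · calc #(Set.range g) ≤ #(Set.range F) := Cardinal.mk_range_le
      _ ≤ #𝒩 := Cardinal.mk_le_mk_of_subset (Set.range_subset_iff.2 hF)
      _ ≤ κ := hcard
  · intro x
    refine ⟨g ⟨F x, Set.mem_range_self x⟩, Set.mem_range_self _, ?_, ?_⟩
    · have h := hg ⟨F x, Set.mem_range_self x⟩
      have : x ∈ F (g ⟨F x, Set.mem_range_self x⟩) := by rw [h]; exact hxF x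
      exact hFV _ this
    · have h := hg ⟨F x, Set.mem_range_self x⟩
      have : g ⟨F x, Set.mem_range_self x⟩ ∈ F x := by
        have h2 := hxF (g ⟨F x, Set.mem_range_self x⟩)
        rwa [h] at h2
      exact hFV x this

end Stmt16
end

section
/- For every topological space X, d(X) ≤ ℓ^∓(X) · χ(X): if every neighborhood assignment on X admits a transversal set of size ≤ λ (a set meeting every assigned neighborhood), and every point of X has a neighborhood base of size ≤ μ, then X has a dense subset of cardinality ≤ λ · μ (assuming λ·μ infinite). -/
open Cardinal

namespace Stmt18

universe u

variable {X : Type u} [TopologicalSpace X]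

/-- `d(X) ≤ ℓ^∓(X) · χ(X)`: if every neighborhood assignment admits a transversal set of
size `≤ lam` and every point has a neighborhood base of size `≤ mu`, with `lam · mu`
infinite, then `X` has a dense subset of cardinality `≤ lam · mu`. -/
theorem density_le_foredensity_mul_character (lam mu : Cardinal.{u})
    (hinf : Cardinal.aleph0 ≤ lam * mu)
    (hlam : ∀ O : X → Set X, (∀ x, O x ∈ nhds x) →
      ∃ A : Set X, #A ≤ lam ∧ ∀ x, (O x ∩ A).Nonempty)
    (hmu : ∀ x : X, ∃ B : Set (Set X), #B ≤ mu ∧ (∀ b ∈ B, b ∈ nhds x) ∧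
      ∀ N ∈ nhds x, ∃ b ∈ B, b ⊆ N) :
    ∃ D : Set X, #D ≤ lam * mu ∧ Dense D := by
  -- Step 1: for each `x`, a base at `x` indexed uniformly by `mu.out`.
  have key : ∀ x : X, ∃ g : mu.out → Set X,
      (∀ β, g β ∈ nhds x) ∧ ∀ N ∈ nhds x, ∃ β, g β ⊆ N := by
    intro x
    obtain ⟨B, hB, hBn, hBbase⟩ := hmu x
    obtain ⟨b, hbB, -⟩ := hBbase Set.univ Filter.univ_mem
    have hne : Nonempty B := ⟨⟨b, hbB⟩⟩
    have hle : #B ≤ #(mu.out) := by rwa [Cardinal.mk_out]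
    obtain ⟨f⟩ := hle
    refine ⟨fun β => (Function.invFun (⇑f) β : B).1, ?_, ?_⟩
    · intro β
      exact hBn _ (Function.invFun (⇑f) β : B).2
    · intro N hN
      obtain ⟨c, hcB, hcN⟩ := hBbase N hN
      refine ⟨f ⟨c, hcB⟩, ?_⟩
      simpa [Function.leftInverse_invFun f.injective ⟨c, hcB⟩] using hcN
  choose g hg1 hg2 using key
  -- Step 2: for each index β, a transversal for the assignment `x ↦ g x β`.
  have key2 : ∀ β : mu.out, ∃ A : Set X, #A ≤ lam ∧ ∀ x, (g x β ∩ A).Nonempty :=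
    fun β => hlam (fun x => g x β) (fun x => hg1 x β)
  choose A hA1 hA2 using key2
  refine ⟨⋃ β, A β, ?_, ?_⟩
  · calc #(⋃ β, A β) ≤ #(mu.out) * ⨆ β, #(A β) := Cardinal.mk_iUnion_le _
    _ ≤ mu * lam := by
        rw [Cardinal.mk_out]
        exact mul_le_mul_right (ciSup_le' hA1) mu
    _ = lam * mu := mul_comm _ _
  · rw [dense_iff_inter_open]
    intro U hU ⟨x, hxU⟩
    obtain ⟨β, hβ⟩ := hg2 x U (hU.mem_nhds hxU)
    obtain ⟨y, hy1, hy2⟩ := hA2 β x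
    exact ⟨y, hβ hy1, Set.mem_iUnion.2 ⟨β, hy2⟩⟩

end Stmt18
end
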